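/- Let π be a pmf on a finite set A with π(a) > 0 for all a, and let c_m : A → ℕ be counts with Σ_a c_m(a) = m, generated by the greedy rule: at each step, increment the count of an action a maximizing π(a) − c(a)/m over the current counts. Then for every a ∈ A and every m ≥ 1, the deviation satisfies |c_m(a)/m − π(a)| ≤ (|A|−1)/m, and consequently c_m(a)/m → π(a) as m → ∞. -/

import Mathlib

open Finset Filter

/-!
Track the deviations `d_m(a) = m·π(a) − c_m(a)`, which sum to `0`. The greedy step increments an
action whose deviation at time `m + 1` is maximal; these deviations sum to `1`, so that maximum is
positive and the increment leaves it above `−1`, while every other deviation only grows by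
`π(a) > 0`. Hence all deviations stay above `−1`, and since they sum to `0`, each one is also
below `|A| − 1`.
-/

theorem abs_le_card_sub_one_of_sum_eq_zero {ι : Type*} [Fintype ι] [DecidableEq ι] {d : ι → ℝ}
    (hsum : ∑ j, d j = 0) (hd : ∀ j, -1 < d j) (i : ι) :
    |d i| ≤ Fintype.card ι - 1 := by
  have hcard : ((univ.erase i).card : ℝ) = Fintype.card ι - 1 := by
    rw [cast_card_erase_of_mem (mem_univ i), card_univ]
  have hrest : d i = -∑ j ∈ univ.erase i, d j := by
    rw [← add_sum_erase univ d (mem_univ i)] at hsum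
    linarith
  have hrest_ge : -((univ.erase i).card : ℝ) ≤ ∑ j ∈ univ.erase i, d j := by
    simpa using card_nsmul_le_sum (univ.erase i) d (-1) fun j _ => (hd j).le
  rw [abs_le, ← hcard]
  refine ⟨?_, by linarith⟩
  rcases (univ.erase i).eq_empty_or_nonempty with hempty | hne
  · simp [hrest, hempty]
  · have : (1 : ℝ) ≤ (univ.erase i).card := by exact_mod_cast hne.card_pos
    linarith [hd i]

section Greedy

variable {A : Type*} [Fintype A] {π : A → ℝ} {c : ℕ → A → ℕ}

theorem sum_mul_sub_counts (hπ_sum : ∑ a, π a = 1) (hcsum : ∀ m, ∑ a, c m a = m)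
    (m : ℕ) (t : ℝ) : ∑ a, (t * π a - c m a) = t - m := by
  rw [sum_sub_distrib, ← mul_sum, hπ_sum, mul_one, ← Nat.cast_sum, hcsum]

theorem greedy_deviation_gt_neg_one [DecidableEq A] (hπ_pos : ∀ a, 0 < π a)
    (hπ_sum : ∑ a, π a = 1) (hc0 : ∀ a, c 0 a = 0) (hcsum : ∀ m, ∑ a, c m a = m)
    (hgreedy : ∀ m : ℕ, ∃ astar : A,
      (∀ a : A, ((m : ℝ) + 1) * π a - c m a ≤ ((m : ℝ) + 1) * π astar - c m astar) ∧
      c (m + 1) = Function.update (c m) astar (c m astar + 1))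
    (m : ℕ) (a : A) : -1 < (m : ℝ) * π a - c m a := by
  induction m generalizing a with
  | zero => simp [hc0]
  | succ n ih =>
    obtain ⟨astar, hmax, hstep⟩ := hgreedy n
    have hsum_one : ∑ b, (((n : ℝ) + 1) * π b - c n b) = 1 := by
      rw [sum_mul_sub_counts hπ_sum hcsum]; ring
    obtain ⟨b, -, hb⟩ := exists_lt_of_sum_lt (s := univ) (f := fun _ => (0 : ℝ))
      (by rw [hsum_one, sum_const_zero]; exact one_pos)
    have hstar_pos : 0 < ((n : ℝ) + 1) * π astar - c n astar := hb.trans_le (hmax b)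
    rw [hstep]
    push_cast
    by_cases ha : a = astar
    · subst ha
      rw [Function.update_self]
      push_cast
      linarith
    · rw [Function.update_of_ne ha]
      linarith [ih a, hπ_pos a]

end Greedy

theorem greedy_counts_converge_general
    {A : Type*} [Fintype A] [DecidableEq A]
    (π : A → ℝ) (hπ_pos : ∀ a, 0 < π a) (hπ_sum : ∑ a : A, π a = 1)
    (c : ℕ → A → ℕ) (hc0 : ∀ a, c 0 a = 0) (hcsum : ∀ m, ∑ a : A, c m a = m)
    (hgreedy : ∀ m : ℕ, ∃ astar : A,
      (∀ a : A, ((m : ℝ) + 1) * π a - c m a ≤ ((m : ℝ) + 1) * π astar - c m astar) ∧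
      c (m + 1) = Function.update (c m) astar (c m astar + 1)) :
    (∀ a : A, ∀ m : ℕ, 1 ≤ m →
      |(c m a : ℝ) / m - π a| ≤ ((Fintype.card A : ℝ) - 1) / m) ∧
    (∀ a : A, Tendsto (fun m : ℕ => (c m a : ℝ) / m) atTop (nhds (π a))) := by
  have hbound : ∀ a : A, ∀ m : ℕ, 1 ≤ m →
      |(c m a : ℝ) / m - π a| ≤ ((Fintype.card A : ℝ) - 1) / m := by
    intro a m hm
    have hm_pos : (0 : ℝ) < m := by exact_mod_cast hm
    have hdev : |(m : ℝ) * π a - c m a| ≤ Fintype.card A - 1 :=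
      abs_le_card_sub_one_of_sum_eq_zero
        (by rw [sum_mul_sub_counts hπ_sum hcsum, sub_self])
        (greedy_deviation_gt_neg_one hπ_pos hπ_sum hc0 hcsum hgreedy m) a
    have hrescale : (c m a : ℝ) / m - π a = -((m : ℝ) * π a - c m a) / m := by
      field_simp; ring
    rw [hrescale, abs_div, abs_neg, abs_of_pos hm_pos]
    gcongr
  refine ⟨hbound, fun a => ?_⟩
  rw [tendsto_iff_norm_sub_tendsto_zero]
  refine squeeze_zero' (Eventually.of_forall fun _ => norm_nonneg _) ?_
    (tendsto_const_div_atTop_nhds_zero_nat ((Fintype.card A : ℝ) - 1))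
  filter_upwards [eventually_ge_atTop 1] with m hm
  exact hbound a m hm

/-- Greedy most-under-sampled-action selection: the empirical frequencies track the
target pmf within `(|A|−1)/m`, and hence converge to the target pmf. -/
theorem greedy_counts_converge
    {A : Type*} [Fintype A] [DecidableEq A] [Nonempty A]
    (π : A → ℝ) (hπ_pos : ∀ a, 0 < π a) (hπ_sum : ∑ a : A, π a = 1)
    (c : ℕ → A → ℕ) (hc0 : ∀ a, c 0 a = 0) (hcsum : ∀ m, ∑ a : A, c m a = m)
    (hgreedy : ∀ m : ℕ, ∃ astar : A,
      (∀ a : A, ((m : ℝ) + 1) * π a - c m a ≤ ((m : ℝ) + 1) * π astar - c m astar) ∧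
      c (m + 1) = Function.update (c m) astar (c m astar + 1)) :
    (∀ a : A, ∀ m : ℕ, 1 ≤ m →
      |(c m a : ℝ) / m - π a| ≤ ((Fintype.card A : ℝ) - 1) / m) ∧
    (∀ a : A, Tendsto (fun m : ℕ => (c m a : ℝ) / m) atTop (nhds (π a))) :=
  greedy_counts_converge_general π hπ_pos hπ_sum c hc0 hcsum hgreedy
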